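/- arXiv:1408.1812 — 4 statements merged into one kernel-verified Lean document; each statement's English description precedes it below -/
import Mathlib

section
/- Let G be a digraph on n ≥ 4 vertices with minimum semidegree δ⁰(G) ≥ 7n/8, and let x, y ∈ V(G) be distinct. Then for every orientation Q of a path on n vertices, G contains a spanning copy of Q whose initial vertex is x and whose final vertex is y; that is, G contains a Hamilton path of any given orientation between x and y. -/
open Finset

noncomputable section

variable {n : ℕ}

def dPlus (G : Finset (Fin n × Fin n)) (X : Finset (Fin n)) (x : Fin n) : ℕ :=
  (G.filter fun e => e.1 = x ∧ e.2 ∈ X).card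

def dMinus (G : Finset (Fin n × Fin n)) (X : Finset (Fin n)) (x : Fin n) : ℕ :=
  (G.filter fun e => e.2 = x ∧ e.1 ∈ X).card

def MinSemi (G : Finset (Fin n × Fin n)) (r : ℝ) : Prop :=
  ∀ x : Fin n, r ≤ (dPlus G Finset.univ x : ℝ) ∧ r ≤ (dMinus G Finset.univ x : ℝ)

/-- An embedding of the oriented path with `ℓ` edges whose `i`-th edge is forward iff `p i`
(only `i < ℓ` is relevant): `f 0, f 1, …, f ℓ` are distinct and consecutive vertices are
joined by an edge of `G` oriented according to `p`. -/
def PathEmbed (G : Finset (Fin n × Fin n)) (p : ℕ → Bool) (ℓ : ℕ) (f : ℕ → Fin n) : Prop :=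
  Set.InjOn f (Set.Iic ℓ) ∧
    ∀ i < ℓ, if p i then (f i, f (i + 1)) ∈ G else (f (i + 1), f i) ∈ G

/-!
Every vertex misses fewer than `n/8` out-neighbours and fewer than `n/8` in-neighbours. Grow a
path from `x` avoiding `y` one vertex at a time. If some unused vertex `v ≠ y` continues the path
in the required direction, append it. Otherwise every unused vertex is a non-neighbour of the
endpoint, so the path already has more than `7n/8 - 2` vertices; we then replace some interior
vertex `f j` by `v` and append `f j` at the end instead. Fewer than `3n/4` positions `j` are
ruled out, so a suitable `j` exists. Once only `v` and `y` are left, the same rerouting, now also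
asking that `f j` be adjacent to `y`, places `v` inside the path and lets it end in `y`.
-/

lemma Set.injOn_update {α β : Type*} [DecidableEq α] {f : α → β} {s : Set α} {a : α}
    {b : β} (hf : Set.InjOn f (s \ {a})) (hb : ∀ x ∈ s \ {a}, f x ≠ b) :
    Set.InjOn (Function.update f a b) s := by
  intro x hx y hy hxy
  by_cases hxa : x = a <;> by_cases hya : y = a
  · rw [hxa, hya]
  · rw [hxa, Function.update_self, Function.update_of_ne hya] at hxy
    exact absurd hxy.symm (hb y ⟨hy, hya⟩)
  · rw [hya, Function.update_self, Function.update_of_ne hxa] at hxy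
    exact absurd hxy (hb x ⟨hx, hxa⟩)
  · rw [Function.update_of_ne hxa, Function.update_of_ne hya] at hxy
    exact hf ⟨hx, hxa⟩ ⟨hy, hya⟩ hxy

lemma Finset.card_filter_comp_mem_le {α β : Type*} {T : Finset α} {φ : α → β}
    (hφ : Set.InjOn φ T) (S : Finset β) [DecidablePred fun a => φ a ∈ S] :
    (T.filter fun a => φ a ∈ S).card ≤ S.card :=
  card_le_card_of_injOn φ (fun _ ha => (mem_filter.mp ha).2)
    (hφ.mono (coe_subset.mpr (filter_subset _ _)))

lemma exists_eq_of_injOn_Iic {f : ℕ → Fin n} (hf : Set.InjOn f (Set.Iic (n - 1))) (v : Fin n) :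
    ∃ i ≤ n - 1, f i = v := by
  have := v.pos
  obtain ⟨i, hi, rfl⟩ := surj_on_of_inj_on_of_card_le (s := Iic (n - 1)) (t := univ)
    (fun i _ => f i) (fun _ _ => mem_univ _)
    (fun _ _ ha hb h => hf (by simpa using ha) (by simpa using hb) h)
    (by simp only [card_univ, Fintype.card_fin, Nat.card_Iic]; omega) v (mem_univ v)
  exact ⟨i, mem_Iic.mp hi, rfl⟩

def Arc (G : Finset (Fin n × Fin n)) (b : Bool) (a c : Fin n) : Prop :=
  if b then (a, c) ∈ G else (c, a) ∈ G

instance (G : Finset (Fin n × Fin n)) (b : Bool) (a c : Fin n) : Decidable (Arc G b a c) := by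
  unfold Arc; infer_instance

def nonArc (G : Finset (Fin n × Fin n)) (b : Bool) (u : Fin n) : Finset (Fin n) :=
  (univ.erase u).filter fun w => ¬ Arc G b u w

def nonAdj (G : Finset (Fin n × Fin n)) (u : Fin n) : Finset (Fin n) :=
  nonArc G true u ∪ nonArc G false u

section Paths

variable {G : Finset (Fin n × Fin n)} {p : ℕ → Bool} {i : ℕ} {f : ℕ → Fin n}

lemma arc_not {b : Bool} {a c : Fin n} : Arc G (!b) a c ↔ Arc G b c a := by
  cases b <;> rfl

lemma le_card_filter_arc (hloops : ∀ e ∈ G, e.1 ≠ e.2) {r : ℝ} (hdeg : MinSemi G r)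
    (b : Bool) (u : Fin n) : r ≤ (((univ.erase u).filter (Arc G b u)).card : ℝ) := by
  cases b
  · convert (hdeg u).2 using 2
    refine card_nbij' (fun w => (w, u)) Prod.fst ?_ ?_ (fun _ _ => rfl) ?_
    · intro w hw
      simp_all [Arc]
    · rintro ⟨w, v⟩ he
      obtain ⟨hG, rfl⟩ : (w, v) ∈ G ∧ v = u := by simpa using he
      simpa [Arc] using ⟨hloops _ hG, hG⟩
    · rintro ⟨w, v⟩ he
      simp_all
  · convert (hdeg u).1 using 2
    refine card_nbij' (fun w => (u, w)) Prod.snd ?_ ?_ (fun _ _ => rfl) ?_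
    · intro w hw
      simp_all [Arc]
    · rintro ⟨v, w⟩ he
      obtain ⟨hG, rfl⟩ : (v, w) ∈ G ∧ v = u := by simpa using he
      simpa [Arc, eq_comm] using ⟨hloops _ hG, hG⟩
    · rintro ⟨v, w⟩ he
      simp_all

lemma card_nonArc (hloops : ∀ e ∈ G, e.1 ≠ e.2) (hdeg : MinSemi G ((7 * n : ℝ) / 8))
    (b : Bool) (u : Fin n) : 8 * (nonArc G b u).card + 8 ≤ n := by
  have hsplit := card_filter_add_card_filter_not (s := univ.erase u) (Arc G b u)
  rw [card_erase_of_mem (mem_univ u), card_univ, Fintype.card_fin] at hsplit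
  have hdeg' : (7 * n : ℝ) ≤ 8 * (((univ.erase u).filter (Arc G b u)).card : ℝ) := by
    linarith [le_card_filter_arc hloops hdeg b u]
  have : 7 * n ≤ 8 * ((univ.erase u).filter (Arc G b u)).card := by exact_mod_cast hdeg'
  have := u.pos
  unfold nonArc
  omega

lemma card_nonAdj (hloops : ∀ e ∈ G, e.1 ≠ e.2) (hdeg : MinSemi G ((7 * n : ℝ) / 8))
    (u : Fin n) : 4 * (nonAdj G u).card + 8 ≤ n := by
  have := card_union_le (nonArc G true u) (nonArc G false u)
  have := card_nonArc hloops hdeg true u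
  have := card_nonArc hloops hdeg false u
  unfold nonAdj
  omega

lemma arc_of_notMem_nonAdj {u w : Fin n} (hwu : w ≠ u) (hw : w ∉ nonAdj G u) (b : Bool) :
    Arc G b u w ∧ Arc G b w u := by
  have hnot : ∀ b, Arc G b u w := by
    intro b
    by_contra h
    exact hw (by cases b <;> simp [nonAdj, nonArc, hwu, h])
  exact ⟨hnot b, arc_not.mp (hnot !b)⟩

lemma PathEmbed.append (hf : PathEmbed G p i f) {w : Fin n} (hw : ∀ k ≤ i, f k ≠ w)
    (harc : Arc G (p i) (f i) w) : PathEmbed G p (i + 1) (Function.update f (i + 1) w) := by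
  refine ⟨Set.injOn_update (hf.1.mono fun k hk => ?_) fun k hk => ?_, fun k hk => ?_⟩
  · simp only [Set.mem_sdiff, Set.mem_Iic, Set.mem_singleton_iff] at hk ⊢
    omega
  · simp only [Set.mem_sdiff, Set.mem_Iic, Set.mem_singleton_iff] at hk
    exact hw k (by omega)
  · change Arc G (p k) _ _
    rcases Nat.lt_succ_iff_lt_or_eq.mp hk with hk | rfl
    · rw [Function.update_of_ne (by omega), Function.update_of_ne (by omega)]
      exact hf.2 k hk
    · rwa [Function.update_self, Function.update_of_ne (by omega)]

lemma PathEmbed.replace (hf : PathEmbed G p i f) {j : ℕ} (hj : 0 < j) (hji : j < i) {v : Fin n}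
    (hv : ∀ k ≤ i, f k ≠ v) (h₁ : Arc G (p (j - 1)) (f (j - 1)) v)
    (h₂ : Arc G (p j) v (f (j + 1))) : PathEmbed G p i (Function.update f j v) := by
  refine ⟨Set.injOn_update (hf.1.mono Set.sdiff_subset) fun k hk => hv k hk.1, fun k hk => ?_⟩
  change Arc G (p k) _ _
  by_cases hkj : k = j
  · subst hkj
    rwa [Function.update_self, Function.update_of_ne (by omega)]
  by_cases hkj' : k + 1 = j
  · obtain rfl : k = j - 1 := by omega
    rwa [Function.update_of_ne hkj, hkj', Function.update_self]
  · rw [Function.update_of_ne hkj, Function.update_of_ne hkj']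
    exact hf.2 k hk

lemma exists_swap_index (hinj : Set.InjOn f (Set.Iic i)) {v : Fin n} (hv : ∀ k ≤ i, f k ≠ v)
    (B : Finset (Fin n)) (hcard : 2 * (nonAdj G v).card + B.card < i - 1) :
    ∃ j, 0 < j ∧ j < i ∧ f j ∉ B ∧
      Arc G (p (j - 1)) (f (j - 1)) v ∧ Arc G (p j) v (f (j + 1)) := by
  have hcomp (g : ℕ → ℕ) (hg : ∀ a ∈ Ico 1 i, ∀ b ∈ Ico 1 i, g a = g b → a = b)
      (hgi : ∀ a ∈ Ico 1 i, g a ≤ i) : Set.InjOn (fun j => f (g j)) (Ico 1 i) :=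
    hinj.comp (fun a ha b hb => hg a ha b hb) (fun a ha => hgi a ha)
  have hprev := card_filter_comp_mem_le (T := Ico 1 i) (φ := fun j => f (j - 1))
    (hcomp _ (by simp only [mem_Ico]; omega) (by simp only [mem_Ico]; omega)) (nonAdj G v)
  have hself := card_filter_comp_mem_le (T := Ico 1 i) (φ := f)
    (hcomp (fun j => j) (by simp) (by simp only [mem_Ico]; omega)) B
  have hnext := card_filter_comp_mem_le (T := Ico 1 i) (φ := fun j => f (j + 1))
    (hcomp _ (by simp) (by simp only [mem_Ico]; omega)) (nonAdj G v)
  have hbad := ((card_union_le _ _).trans (add_le_add_left (card_union_le _ _) _)).trans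
    (add_le_add (add_le_add hprev hself) hnext)
  obtain ⟨j, hj, hjgood⟩ := exists_mem_notMem_of_card_lt_card (t := Ico 1 i)
    (hbad.trans_lt (by rw [Nat.card_Ico]; omega))
  simp only [mem_union, mem_filter, hj, true_and, not_or] at hjgood
  obtain ⟨⟨hprev, hself⟩, hnext⟩ := hjgood
  rw [mem_Ico] at hj
  exact ⟨j, hj.1, hj.2, hself, (arc_of_notMem_nonAdj (hv _ (by omega)) hprev _).2,
    (arc_of_notMem_nonAdj (hv _ hj.2) hnext _).1⟩

lemma card_filter_fresh (hinj : Set.InjOn f (Set.Iic i)) {y : Fin n} (hy : ∀ k ≤ i, f k ≠ y) :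
    (univ.filter fun v => v ≠ y ∧ ∀ k ≤ i, f k ≠ v).card = n - (i + 2) := by
  have hyf : y ∉ (Iic i).image f := by simpa using hy
  have hfresh : (univ.filter fun v => v ≠ y ∧ ∀ k ≤ i, f k ≠ v) =
      univ \ insert y ((Iic i).image f) := by
    ext v
    simp [eq_comm (a := v)]
  rw [hfresh, card_sdiff_of_subset (subset_univ _), card_insert_of_notMem hyf,
    card_image_of_injOn (by rwa [coe_Iic]), Nat.card_Iic, card_univ, Fintype.card_fin]

/-- Put `v` in place of a suitable interior vertex `f j` and move `f j` to the end. -/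
lemma PathEmbed.exists_reroute (hf : PathEmbed G p i f) {v : Fin n} (hv : ∀ k ≤ i, f k ≠ v)
    (B : Finset (Fin n)) (hB : nonAdj G (f i) ⊆ B)
    (hcard : 2 * (nonAdj G v).card + B.card < i - 1) :
    ∃ g, PathEmbed G p (i + 1) g ∧ g 0 = f 0 ∧ g (i + 1) ∉ B ∧
      ∀ w ≠ v, (∀ k ≤ i, f k ≠ w) → ∀ k ≤ i + 1, g k ≠ w := by
  obtain ⟨j, hj, hji, hjB, h₁, h₂⟩ := exists_swap_index (p := p) hf.1 hv B hcard
  have hfj : ∀ k ≤ i, Function.update f j v k ≠ f j := by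
    intro k hk
    rw [Function.update_apply]
    split_ifs with hkj
    · exact (hv j hji.le).symm
    · exact fun h => hkj (hf.1 (Set.mem_Iic.mpr hk) (Set.mem_Iic.mpr hji.le) h)
  have harc : Arc G (p i) (Function.update f j v i) (f j) := by
    have hji' : f j ≠ f i := fun h => hji.ne (hf.1 (Set.mem_Iic.mpr hji.le) Set.self_mem_Iic h)
    rw [Function.update_of_ne hji.ne']
    exact (arc_of_notMem_nonAdj hji' (fun h => hjB (hB h)) _).1
  refine ⟨_, (hf.replace hj hji hv h₁ h₂).append hfj harc, ?_, ?_, ?_⟩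
  · rw [Function.update_of_ne (by omega), Function.update_of_ne hj.ne]
  · rwa [Function.update_self]
  · intro w hwv hw k hk
    simp only [Function.update_apply]
    split_ifs
    · exact hw j hji.le
    · exact hwv.symm
    · exact hw k (by omega)

lemma PathEmbed.exists_extend (hloops : ∀ e ∈ G, e.1 ≠ e.2)
    (hdeg : MinSemi G ((7 * n : ℝ) / 8)) (hf : PathEmbed G p i f) {y : Fin n}
    (hy : ∀ k ≤ i, f k ≠ y) (hi : i + 3 ≤ n) :
    ∃ g, PathEmbed G p (i + 1) g ∧ g 0 = f 0 ∧ ∀ k ≤ i + 1, g k ≠ y := by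
  set R := univ.filter fun v => v ≠ y ∧ ∀ k ≤ i, f k ≠ v
  have hR : R.card = n - (i + 2) := card_filter_fresh hf.1 hy
  by_cases hgreedy : ∃ v ∈ R, Arc G (p i) (f i) v
  · obtain ⟨v, hvR, harc⟩ := hgreedy
    obtain ⟨hvy, hv⟩ : v ≠ y ∧ ∀ k ≤ i, f k ≠ v := by simpa [R] using hvR
    refine ⟨_, hf.append hv harc, Function.update_of_ne (by omega) _ _, fun k hk => ?_⟩
    rw [Function.update_apply]
    split_ifs
    · exact hvy
    · exact hy k (by omega)
  · push Not at hgreedy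
    have hRsub : R ⊆ nonAdj G (f i) := fun v hv => by
      by_contra h
      exact hgreedy v hv (arc_of_notMem_nonAdj ((mem_filter.mp hv).2.2 i le_rfl).symm h _).1
    obtain ⟨v, hv⟩ : R.Nonempty := card_pos.mp (by omega)
    obtain ⟨hvy, hv⟩ := (mem_filter.mp hv).2
    have := card_le_card hRsub
    have := card_nonAdj hloops hdeg v
    have := card_nonAdj hloops hdeg (f i)
    obtain ⟨g, hg, hg0, -, hgy⟩ := hf.exists_reroute hv _ subset_rfl (by omega)
    exact ⟨g, hg, hg0, hgy y hvy.symm hy⟩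

lemma exists_pathEmbed_avoiding (hloops : ∀ e ∈ G, e.1 ≠ e.2)
    (hdeg : MinSemi G ((7 * n : ℝ) / 8)) (p : ℕ → Bool) {x y : Fin n} (hxy : x ≠ y) :
    ∀ i, i + 3 ≤ n → ∃ f, PathEmbed G p i f ∧ f 0 = x ∧ ∀ k ≤ i, f k ≠ y
  | 0, _ => ⟨fun _ => x, ⟨fun _ ha _ hb _ => (Nat.le_zero.mp ha).trans (Nat.le_zero.mp hb).symm,
      fun k hk => absurd hk k.not_lt_zero⟩, rfl, fun _ _ => hxy⟩
  | i + 1, hi => by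
    obtain ⟨f, hf, hf0, hfy⟩ := exists_pathEmbed_avoiding hloops hdeg p hxy i (by omega)
    obtain ⟨g, hg, hg0, hgy⟩ := hf.exists_extend hloops hdeg hfy (by omega)
    exact ⟨g, hg, hg0.trans hf0, hgy⟩

lemma PathEmbed.exists_extend_ending_at (hloops : ∀ e ∈ G, e.1 ≠ e.2)
    (hdeg : MinSemi G ((7 * n : ℝ) / 8)) (hf : PathEmbed G p i f) {y : Fin n}
    (hy : ∀ k ≤ i, f k ≠ y) (hi : i + 3 = n) :
    ∃ g, PathEmbed G p (i + 2) g ∧ g 0 = f 0 ∧ g (i + 2) = y := by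
  obtain ⟨v, hv⟩ : (univ.filter fun v => v ≠ y ∧ ∀ k ≤ i, f k ≠ v).Nonempty :=
    card_pos.mp (by rw [card_filter_fresh hf.1 hy]; omega)
  obtain ⟨hvy, hv⟩ := (mem_filter.mp hv).2
  have := card_union_le (nonAdj G (f i)) (nonAdj G y)
  have := card_nonAdj hloops hdeg v
  have := card_nonAdj hloops hdeg (f i)
  have := card_nonAdj hloops hdeg y
  obtain ⟨g, hg, hg0, hgB, hgy⟩ :=
    hf.exists_reroute hv (nonAdj G (f i) ∪ nonAdj G y) subset_union_left (by omega)
  have harc := (arc_of_notMem_nonAdj (hgy y hvy.symm hy _ le_rfl)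
    (fun h => hgB (mem_union_right _ h)) (p (i + 1))).2
  exact ⟨_, hg.append (hgy y hvy.symm hy) harc, by rw [Function.update_of_ne (by omega), hg0],
    Function.update_self _ _ _⟩

end Paths

theorem stmt_1_general (n : ℕ)
    (G : Finset (Fin n × Fin n)) (hloops : ∀ e ∈ G, e.1 ≠ e.2)
    (hdeg : MinSemi G ((7 * n : ℝ) / 8))
    (x y : Fin n) (hxy : x ≠ y)
    (p : ℕ → Bool) :
    ∃ f : ℕ → Fin n, PathEmbed G p (n - 1) f ∧
      (∀ v : Fin n, ∃ i ≤ n - 1, f i = v) ∧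
      f 0 = x ∧ f (n - 1) = y := by
  have h8 : 8 ≤ n := by
    have := card_nonAdj hloops hdeg x
    omega
  obtain ⟨f, hf, hf0, hfy⟩ := exists_pathEmbed_avoiding hloops hdeg p hxy (n - 3) (by omega)
  obtain ⟨g, hg, hg0, hgy⟩ := hf.exists_extend_ending_at hloops hdeg hfy (by omega)
  rw [show n - 3 + 2 = n - 1 by omega] at hg hgy
  exact ⟨g, hg, exists_eq_of_injOn_Iic hg.1, hg0.trans hf0, hgy⟩

/-- a digraph on `n ≥ 4` vertices with minimum semidegree at least `7n/8`
contains a Hamilton path of any given orientation between any two given distinct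
vertices `x` and `y`. -/
theorem stmt_1 (n : ℕ) (hn : 4 ≤ n)
    (G : Finset (Fin n × Fin n)) (hloops : ∀ e ∈ G, e.1 ≠ e.2)
    (hdeg : MinSemi G ((7 * n : ℝ) / 8))
    (x y : Fin n) (hxy : x ≠ y)
    (p : ℕ → Bool) :
    ∃ f : ℕ → Fin n, PathEmbed G p (n - 1) f ∧
      (∀ v : Fin n, ∃ i ≤ n - 1, f i = v) ∧
      f 0 = x ∧ f (n - 1) = y :=
  stmt_1_general n G hloops hdeg x y hxy p
end
end

section
/- For all τ, ε ∈ (0,1) there exists ν₀ > 0 such that for every 0 < ν ≤ min(ν₀, τ) there exists n₀ ∈ ℕ such that the following holds for all n ≥ n₀: if G is a digraph on n vertices with δ⁰(G) ≥ n/2, then G is ε-extremal or G is a robust (ν,τ)-outexpander. -/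
/-!
Suppose some `X` with `τn < |X| < (1-τ)n` has robust outneighbourhood `R` with
`|R| < |X| + νn`. Double counting the at least `|X| n/2` edges leaving `X` gives
`|X| (n/2 - |R|) ≤ νn²`, so `|R| ≥ n/2 - νn/τ`. As `ν ≤ τ`, `|R| < n` and `Y = Rᶜ` is nonempty;
a vertex of `Y` has in-degree at least `n/2` but fewer than `νn` inneighbours in `X`, so
`|X| ≤ n/2 + νn`. Hence `|X|` and `|Y|` are both within `2νn/τ` of `n/2`, while `e(X, Y) ≤ νn²`
because no vertex of `Y` is a robust outneighbour. Resizing `X` and `Y` to `⌊n/2⌋` and `⌈n/2⌉`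
vertices changes `e(X, Y)` by at most `(4νn/τ + 1) n`, and then `A = X ∩ Y`, `B = (X ∪ Y)ᶜ`,
`S = X \ Y`, `T = Y \ X` witnesses `ε`-extremality.
-/

open Finset

open scoped Classical

noncomputable section

variable {n : ℕ}

def Partition4 (A B S T : Finset (Fin n)) : Prop :=
  A ∪ B ∪ S ∪ T = Finset.univ ∧ Disjoint A B ∧ Disjoint A S ∧ Disjoint A T ∧
    Disjoint B S ∧ Disjoint B T ∧ Disjoint S T

/-- `G` is `ε`-extremal: there is a partition `A,B,S,T` of the vertices with
`|a-b| ≤ 1`, `|s-t| ≤ 1` and `e(A∪S, A∪T) < ε n²`. -/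
def EpsExtremal (G : Finset (Fin n × Fin n)) (ε : ℝ) : Prop :=
  ∃ A B S T : Finset (Fin n), Partition4 A B S T ∧
    |(A.card : ℝ) - (B.card : ℝ)| ≤ 1 ∧ |(S.card : ℝ) - (T.card : ℝ)| ≤ 1 ∧
    ((G.filter fun e => e.1 ∈ A ∪ S ∧ e.2 ∈ A ∪ T).card : ℝ) < ε * (n : ℝ) ^ 2

/-- `G` is a robust `(ν,τ)`-outexpander: every vertex set `S` with `τn < |S| < (1-τ)n`
has `ν`-robust outneighbourhood of size at least `|S| + νn`. -/
def RobustExpander (G : Finset (Fin n × Fin n)) (ν τ : ℝ) : Prop :=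
  ∀ S : Finset (Fin n), τ * n < (S.card : ℝ) → (S.card : ℝ) < (1 - τ) * n →
    (S.card : ℝ) + ν * n ≤
      ((Finset.univ.filter fun x : Fin n => ν * n ≤ (dMinus G S x : ℝ)).card : ℝ)

def edgeCount (G : Finset (Fin n × Fin n)) (X Y : Finset (Fin n)) : ℕ :=
  (G.filter fun e => e.1 ∈ X ∧ e.2 ∈ Y).card

-- `RN⁺_{ν,G}(X)`
def robustOut (G : Finset (Fin n × Fin n)) (ν : ℝ) (X : Finset (Fin n)) : Finset (Fin n) :=
  univ.filter fun x => ν * n ≤ (dMinus G X x : ℝ)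

theorem Finset.exists_card_eq_card_sdiff_eq {α : Type*} [Fintype α] [DecidableEq α]
    (X : Finset α) {k : ℕ} (hk : k ≤ Fintype.card α) :
    ∃ X' : Finset α, X'.card = k ∧ (X' \ X).card = k - X.card := by
  rcases le_total k X.card with h | h
  · obtain ⟨X', hX'X, rfl⟩ := exists_subset_card_eq h
    exact ⟨X', rfl, by simp [sdiff_eq_empty_iff_subset.mpr hX'X, Nat.sub_eq_zero_of_le h]⟩
  · obtain ⟨X', hXX', -, rfl⟩ :=
      exists_subsuperset_card_eq (subset_univ X) h (by simpa using hk)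
    exact ⟨X', rfl, card_sdiff_of_subset hXX'⟩

section Counting

variable (G : Finset (Fin n × Fin n))

theorem dMinus_le_card (X : Finset (Fin n)) (w : Fin n) : dMinus G X w ≤ X.card :=
  card_le_card_of_injOn Prod.fst (fun _ he => (mem_filter.mp he).2.2)
    fun _ he _ hf hef => Prod.ext hef ((mem_filter.mp he).2.1.trans
      (mem_filter.mp hf).2.1.symm)

theorem dMinus_univ_le (X : Finset (Fin n)) (w : Fin n) :
    dMinus G univ w ≤ dMinus G X w + Xᶜ.card := by
  refine le_trans ?_ (Nat.add_le_add_left (dMinus_le_card G Xᶜ w) _)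
  unfold dMinus
  refine le_trans (card_le_card fun e he => ?_) (card_union_le _ _)
  by_cases h : e.1 ∈ X <;> simp_all

theorem edgeCount_eq_sum_dMinus (X Y : Finset (Fin n)) :
    edgeCount G X Y = ∑ w ∈ Y, dMinus G X w := by
  rw [edgeCount, card_eq_sum_card_fiberwise (f := Prod.snd) (t := Y)
    fun e he => (mem_filter.mp he).2.2]
  refine sum_congr rfl fun w hw => congrArg card ?_
  ext e
  simp only [mem_filter]
  constructor
  · rintro ⟨⟨heG, hX, -⟩, rfl⟩; exact ⟨heG, rfl, hX⟩
  · rintro ⟨heG, rfl, hX⟩; exact ⟨⟨heG, hX, hw⟩, rfl⟩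

theorem edgeCount_eq_sum_dPlus (X Y : Finset (Fin n)) :
    edgeCount G X Y = ∑ v ∈ X, dPlus G Y v := by
  rw [edgeCount, card_eq_sum_card_fiberwise (f := Prod.fst) (t := X)
    fun e he => (mem_filter.mp he).2.1]
  refine sum_congr rfl fun v hv => congrArg card ?_
  ext e
  simp only [mem_filter]
  constructor
  · rintro ⟨⟨heG, -, hY⟩, rfl⟩; exact ⟨heG, rfl, hY⟩
  · rintro ⟨heG, rfl, hY⟩; exact ⟨⟨heG, hv, hY⟩, rfl⟩

theorem edgeCount_le_edgeCount_add (X X' Y Y' : Finset (Fin n)) :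
    edgeCount G X' Y' ≤ edgeCount G X Y + (X' \ X).card * n + (Y' \ Y).card * n := by
  have hfst : (G.filter fun e => e.1 ∈ X' \ X).card ≤ (X' \ X).card * n := by
    simpa using card_le_card (s := G.filter fun e => e.1 ∈ X' \ X)
      (t := (X' \ X) ×ˢ univ) fun e he => by simp_all
  have hsnd : (G.filter fun e => e.2 ∈ Y' \ Y).card ≤ (Y' \ Y).card * n := by
    simpa [mul_comm] using card_le_card (s := G.filter fun e => e.2 ∈ Y' \ Y)
      (t := univ ×ˢ (Y' \ Y)) fun e he => by simp_all
  have hsub : (G.filter fun e => e.1 ∈ X' ∧ e.2 ∈ Y') ⊆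
      (G.filter fun e => e.1 ∈ X ∧ e.2 ∈ Y) ∪ (G.filter fun e => e.1 ∈ X' \ X) ∪
        (G.filter fun e => e.2 ∈ Y' \ Y) := fun e he => by
    by_cases hx : e.1 ∈ X <;> by_cases hy : e.2 ∈ Y <;> simp_all
  calc edgeCount G X' Y' ≤ _ := card_le_card hsub
    _ ≤ _ := card_union_le _ _
    _ ≤ _ := Nat.add_le_add_right (card_union_le _ _) _
    _ ≤ _ := by unfold edgeCount; omega

end Counting

theorem Nat.cast_sub_le_abs_sub (a b : ℕ) : ((a - b : ℕ) : ℝ) ≤ |(a : ℝ) - b| := by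
  rcases le_total a b with h | h
  · simp [Nat.sub_eq_zero_of_le h]
  · rw [Nat.cast_sub h]; exact le_abs_self _

section Extremal

variable {G : Finset (Fin n × Fin n)} {ε : ℝ}

theorem epsExtremal_of_card_add_card {X Y : Finset (Fin n)} (hsum : X.card + Y.card = n)
    (hXY : |(X.card : ℝ) - Y.card| ≤ 1) (hedge : (edgeCount G X Y : ℝ) < ε * n ^ 2) :
    EpsExtremal G ε := by
  refine ⟨X ∩ Y, (X ∪ Y)ᶜ, X \ Y, Y \ X, ?_, ?_, ?_, ?_⟩
  · simp only [Partition4, disjoint_left, Finset.ext_iff]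
    simp only [mem_union, mem_inter, mem_sdiff, mem_compl,
      mem_univ, iff_true]
    tauto
  · have hinter := card_inter_add_card_union X Y
    have hcompl := card_compl_add_card (X ∪ Y)
    simp only [Fintype.card_fin] at hcompl
    rw [show (X ∩ Y).card = (X ∪ Y)ᶜ.card by omega, sub_self, abs_zero]
    exact zero_le_one
  · have hX := card_sdiff_add_card_inter X Y
    have hY := card_sdiff_add_card_inter Y X
    rw [inter_comm] at hY
    have hdiff : ((X \ Y).card : ℝ) - (Y \ X).card = X.card - Y.card := by
      rw [← hX, ← hY]; push_cast; ring
    rwa [hdiff]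
  · have hAS : X ∩ Y ∪ X \ Y = X := sup_inf_sdiff X Y
    have hAT : X ∩ Y ∪ Y \ X = Y := by rw [inter_comm]; exact sup_inf_sdiff Y X
    rwa [hAS, hAT]

theorem epsExtremal_of_abs_card_sub_half_le {X Y : Finset (Fin n)} {d : ℝ}
    (hX : |(X.card : ℝ) - n / 2| ≤ d) (hY : |(Y.card : ℝ) - n / 2| ≤ d)
    (hedge : (edgeCount G X Y : ℝ) + (2 * d + 1) * n < ε * n ^ 2) : EpsExtremal G ε := by
  obtain ⟨X', hX'card, hX'X⟩ := X.exists_card_eq_card_sdiff_eq (k := n / 2) (by simp; omega)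
  obtain ⟨Y', hY'card, hY'Y⟩ := Y.exists_card_eq_card_sdiff_eq (k := n - n / 2) (by simp)
  have hfloor : 2 * ((n / 2 : ℕ) : ℝ) ≤ n ∧ (n : ℝ) ≤ 2 * ((n / 2 : ℕ) : ℝ) + 1 := by
    constructor <;> norm_cast <;> omega
  have hceil : ((n - n / 2 : ℕ) : ℝ) = n - ((n / 2 : ℕ) : ℝ) := Nat.cast_sub (Nat.div_le_self n 2)
  have hmove (Z Z' : Finset (Fin n)) (k : ℕ) (hk : |(k : ℝ) - n / 2| ≤ 1 / 2)
      (hZ : |(Z.card : ℝ) - n / 2| ≤ d) (hZ' : (Z' \ Z).card = k - Z.card) :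
      ((Z' \ Z).card : ℝ) ≤ d + 1 / 2 := by
    rw [hZ']
    calc _ ≤ |(k : ℝ) - Z.card| := Nat.cast_sub_le_abs_sub _ _
      _ ≤ |(k : ℝ) - n / 2| + |n / 2 - (Z.card : ℝ)| := abs_sub_le _ _ _
      _ ≤ d + 1 / 2 := by rw [abs_sub_comm (n / 2 : ℝ)]; linarith
  have hX'move := hmove X X' _ (by rw [abs_le]; constructor <;> linarith) hX hX'X
  have hY'move := hmove Y Y' _ (by rw [hceil, abs_le]; constructor <;> linarith) hY hY'Y
  refine epsExtremal_of_card_add_card (X := X') (Y := Y') (by omega) ?_ ?_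
  · rw [hX'card, hY'card, hceil, abs_le]; constructor <;> linarith
  · have hcount : (edgeCount G X' Y' : ℝ) ≤
        edgeCount G X Y + (X' \ X).card * n + (Y' \ Y).card * n := by
      exact_mod_cast edgeCount_le_edgeCount_add G X X' Y Y'
    have hn : (0 : ℝ) ≤ n := n.cast_nonneg
    nlinarith

end Extremal

theorem abs_sub_half_le_of_expansion_defect {τ ν N x r : ℝ} (hτ : 0 < τ) (hτ1 : τ ≤ 1)
    (hν : 0 ≤ ν) (hN : 0 < N) (hx : τ * N < x) (hr : r < x + ν * N)
    (hxr : x * (N / 2) ≤ x * r + ν * N * N) (hxN : x < N / 2 + ν * N) :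
    |x - N / 2| ≤ 2 * ν * N / τ ∧ |r - N / 2| ≤ 2 * ν * N / τ := by
  have hνN : 0 ≤ ν * N := mul_nonneg hν hN.le
  have hτνN : τ * (ν * N) ≤ ν * N := mul_le_of_le_one_left hνN hτ1
  have hrlow : τ * (N / 2 - r) ≤ ν * N := by
    rcases le_or_gt (N / 2) r with h | h
    · nlinarith
    · have : τ * N * (N / 2 - r) ≤ x * (N / 2 - r) :=
        mul_le_mul_of_nonneg_right hx.le (by linarith)
      exact le_of_mul_le_mul_right (by nlinarith) hN
  have hxup : τ * (x - N / 2) ≤ τ * (ν * N) := by gcongr; linarith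
  have hrx : τ * (r - x) ≤ τ * (ν * N) := by gcongr; linarith
  rw [abs_sub_le_iff, abs_sub_le_iff]
  simp only [le_div_iff₀ hτ]
  refine ⟨⟨?_, ?_⟩, ?_, ?_⟩ <;> nlinarith

section RobustOut

variable (G : Finset (Fin n × Fin n)) {ν : ℝ} (X : Finset (Fin n))

theorem dMinus_lt_of_notMem_robustOut {w : Fin n} (hw : w ∉ robustOut G ν X) :
    (dMinus G X w : ℝ) < ν * n := by
  simpa [robustOut] using hw

theorem dMinus_univ_lt_of_notMem_robustOut {w : Fin n} (hw : w ∉ robustOut G ν X) :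
    (dMinus G univ w : ℝ) < ν * n + Xᶜ.card := by
  have hX := dMinus_lt_of_notMem_robustOut G X hw
  have hsplit : (dMinus G univ w : ℝ) ≤ dMinus G X w + Xᶜ.card := by
    exact_mod_cast dMinus_univ_le G X w
  linarith

theorem edgeCount_compl_robustOut_le (hν : 0 ≤ ν) :
    (edgeCount G X (robustOut G ν X)ᶜ : ℝ) ≤ ν * n * n := by
  rw [edgeCount_eq_sum_dMinus]
  push_cast
  calc _ ≤ ∑ _w ∈ (robustOut G ν X)ᶜ, ν * n :=
        sum_le_sum fun _ hw => (dMinus_lt_of_notMem_robustOut G X (mem_compl.mp hw)).le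
    _ ≤ ∑ _w : Fin n, ν * n :=
        sum_le_sum_of_subset_of_nonneg (subset_univ _) fun _ _ _ => by positivity
    _ = ν * n * n := by simp [mul_comm]

theorem edgeCount_robustOut_le :
    edgeCount G X (robustOut G ν X) ≤ (robustOut G ν X).card * X.card := by
  rw [edgeCount_eq_sum_dMinus]
  simpa using sum_le_sum fun w (_ : w ∈ robustOut G ν X) => dMinus_le_card G X w

theorem card_mul_le_card_robustOut (hν : 0 ≤ ν) {δ : ℝ} (hδ : ∀ v ∈ X, δ ≤ dPlus G univ v) :
    X.card * δ ≤ X.card * (robustOut G ν X).card + ν * n * n := by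
  have hout : X.card * δ ≤ edgeCount G X univ := by
    rw [edgeCount_eq_sum_dPlus]
    push_cast
    simpa using sum_le_sum hδ
  have hsplit : edgeCount G X univ =
      edgeCount G X (robustOut G ν X) + edgeCount G X (robustOut G ν X)ᶜ := by
    simp only [edgeCount_eq_sum_dMinus, sum_add_sum_compl]
  have hin : (edgeCount G X (robustOut G ν X) : ℝ) ≤ (robustOut G ν X).card * X.card := by
    exact_mod_cast edgeCount_robustOut_le G X
  have hcompl := edgeCount_compl_robustOut_le G X hν
  rw [hsplit] at hout
  push_cast at hout
  linarith

end RobustOut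

theorem abs_card_sub_half_le_of_card_robustOut_lt {G : Finset (Fin n × Fin n)}
    (hG : MinSemi G (n / 2)) {τ ν : ℝ} (hτ : 0 < τ) (hτ1 : τ ≤ 1) (hν : 0 ≤ ν) (hντ : ν ≤ τ)
    {X : Finset (Fin n)} (hXlo : τ * n < X.card) (hXhi : (X.card : ℝ) < (1 - τ) * n)
    (hR : ((robustOut G ν X).card : ℝ) < X.card + ν * n) :
    |(X.card : ℝ) - n / 2| ≤ 2 * ν * n / τ ∧
      |((robustOut G ν X)ᶜ.card : ℝ) - n / 2| ≤ 2 * ν * n / τ := by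
  set R := robustOut G ν X
  have hcompl (Z : Finset (Fin n)) : (Zᶜ.card : ℝ) = n - Z.card := by
    rw [card_compl, Fintype.card_fin, Nat.cast_sub (card_le_univ Z |>.trans_eq (by simp))]
  have hn : (0 : ℝ) < n := by nlinarith [X.card.cast_nonneg (α := ℝ)]
  obtain ⟨w, hw⟩ : Rᶜ.Nonempty := by
    rw [← card_pos, ← Nat.cast_pos (α := ℝ), hcompl]
    nlinarith
  have hxN := dMinus_univ_lt_of_notMem_robustOut G X (mem_compl.mp hw)
  rw [hcompl] at hxN
  have hxr := card_mul_le_card_robustOut G X hν fun v _ => (hG v).1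
  obtain ⟨hXhalf, hRhalf⟩ := abs_sub_half_le_of_expansion_defect hτ hτ1 hν hn hXlo hR hxr
    (by linarith [(hG w).2])
  rw [hcompl, show (n : ℝ) - R.card - n / 2 = -(R.card - n / 2) by ring, abs_neg]
  exact ⟨hXhalf, hRhalf⟩

/-- a digraph with minimum semidegree at least `n/2` is `ε`-extremal or a
robust `(ν,τ)`-outexpander. -/
theorem stmt_3 :
    ∀ τ ε : ℝ, 0 < τ → τ < 1 → 0 < ε → ε < 1 →
      ∃ ν₀ : ℝ, 0 < ν₀ ∧ ∀ ν : ℝ, 0 < ν → ν ≤ min ν₀ τ →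
        ∃ n₀ : ℕ, ∀ n : ℕ, n₀ ≤ n →
          ∀ G : Finset (Fin n × Fin n), (∀ e ∈ G, e.1 ≠ e.2) →
            MinSemi G ((n : ℝ) / 2) →
            EpsExtremal G ε ∨ RobustExpander G ν τ := by
  intro τ ε hτ hτ1 hε _
  refine ⟨ε * τ / 10, by positivity, fun ν hν hνle => ⟨⌈2 / ε⌉₊ + 1, fun n hn G _ hG => ?_⟩⟩
  obtain ⟨hνε, hντ⟩ := le_min_iff.mp hνle
  refine or_iff_not_imp_right.mpr fun hexp => ?_
  obtain ⟨X, hXlo, hXhi, hR⟩ : ∃ X : Finset (Fin n), τ * n < X.card ∧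
      (X.card : ℝ) < (1 - τ) * n ∧ ((robustOut G ν X).card : ℝ) < X.card + ν * n := by
    simpa [RobustExpander, robustOut] using hexp
  obtain ⟨hX, hY⟩ :=
    abs_card_sub_half_le_of_card_robustOut_lt hG hτ hτ1.le hν.le hντ hXlo hXhi hR
  refine epsExtremal_of_abs_card_sub_half_le hX hY ?_
  -- `ν ≤ ετ/10` makes `νn² + 4νn²/τ ≤ εn²/2`, and `n > 2/ε` absorbs the rounding term `n`.
  have hedge := edgeCount_compl_robustOut_le G X hν.le
  have hεn : 2 < ε * n := by
    have h : 2 / ε < n := (Nat.le_ceil _).trans_lt (by exact_mod_cast Nat.lt_of_succ_le hn)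
    rwa [div_lt_iff₀ hε, mul_comm] at h
  have hνn : ν * n * n ≤ ε * n ^ 2 / 10 := by nlinarith
  have hντn : 2 * (2 * ν * n / τ) * n ≤ 4 * ε * n ^ 2 / 10 := by
    have hντ' : ν / τ ≤ ε / 10 := by rw [div_le_iff₀ hτ]; linarith
    calc 2 * (2 * ν * n / τ) * n = 4 * (ν / τ) * n ^ 2 := by ring
      _ ≤ 4 * (ε / 10) * n ^ 2 := by gcongr
      _ = 4 * ε * n ^ 2 / 10 := by ring
  nlinarith
end
end

section
/- Suppose 1/n ≪ ε ≪ 1 (i.e. ε is sufficiently small and n sufficiently large depending on ε) and n/4 ≤ k ≤ 3n/4. Let C be an oriented cycle on n vertices with σ(C) < εn. Then the vertices of C can be cyclically enumerated as C = (u₁u₂…u_n) such that: (i) there exist long runs P₁, P₂ in C such that P₁ is a forward path and d_C(P₁, P₂) = k; and (ii) there exist long runs P₁′, P₂′, P₃′, P₄′ in C such that d_C(P_i′, P_{i+1}′) = ⌊n/4⌋ for i = 1, 2, 3. -/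
open Finset

noncomputable section

variable {n : ℕ}

/-- The number of sink vertices of the oriented cycle described by `c`. -/
def CycleSinks (c : ZMod n → Bool) : ℕ :=
  Nat.card {i : ZMod n // c i = true ∧ c (i + 1) = false}

/-- The orientation obtained from `c` by reversing the cyclic enumeration of the
vertices (the new vertex `i` is the old vertex `-i`). -/
def RevC (c : ZMod n → Bool) : ZMod n → Bool := fun i => ! c (-(i + 1))

/-- The subpath of the cycle starting at vertex `j` with `20` edges is a forward path. -/
def FwdRun (c : ZMod n → Bool) (j : ZMod n) : Prop :=
  ∀ i : ℕ, i < 20 → c (j + (i : ZMod n)) = true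

/-- The subpath of the cycle starting at vertex `j` with `20` edges is a long run, i.e.
it is consistently oriented. -/
def Run (c : ZMod n → Bool) (j : ZMod n) : Prop :=
  (∀ i : ℕ, i < 20 → c (j + (i : ZMod n)) = true) ∨
    (∀ i : ℕ, i < 20 → c (j + (i : ZMod n)) = false)

lemma cycleSinks_eq [NeZero n] (c : ZMod n → Bool) :
    CycleSinks c = (univ.filter fun i : ZMod n => c i = true ∧ c (i + 1) = false).card := by
  rw [CycleSinks, Nat.card_eq_fintype_card, Fintype.card_subtype]

lemma ups_eq_downs [NeZero n] (c : ZMod n → Bool) :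
    (univ.filter fun i : ZMod n => c i = false ∧ c (i + 1) = true).card
    = (univ.filter fun i : ZMod n => c i = true ∧ c (i + 1) = false).card := by
  have key : ∀ i : ZMod n,
      (if c i = true then 1 else 0) + (if c i = false ∧ c (i + 1) = true then 1 else 0)
      = (if c (i + 1) = true then 1 else 0)
        + (if c i = true ∧ c (i + 1) = false then 1 else 0 : ℕ) := by
    intro i; cases h1 : c i <;> cases h2 : c (i + 1) <;> simp [h1, h2]
  have hsum := Finset.sum_congr rfl (fun i (_ : i ∈ (univ : Finset (ZMod n))) => key i)
  rw [Finset.sum_add_distrib, Finset.sum_add_distrib] at hsum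
  have hshift : ∑ i : ZMod n, (if c (i + 1) = true then 1 else 0 : ℕ)
      = ∑ i : ZMod n, (if c i = true then 1 else 0 : ℕ) :=
    Fintype.sum_equiv (Equiv.addRight (1 : ZMod n)) _ _ (fun i => rfl)
  rw [hshift] at hsum
  have h1 : (univ.filter fun i : ZMod n => c i = false ∧ c (i + 1) = true).card
      = ∑ i : ZMod n, (if c i = false ∧ c (i + 1) = true then 1 else 0 : ℕ) := by
    rw [Finset.card_filter]
  have h2 : (univ.filter fun i : ZMod n => c i = true ∧ c (i + 1) = false).card
      = ∑ i : ZMod n, (if c i = true ∧ c (i + 1) = false then 1 else 0 : ℕ) := by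
    rw [Finset.card_filter]
  omega

lemma cycleSinks_revC [NeZero n] (c : ZMod n → Bool) : CycleSinks (RevC c) = CycleSinks c := by
  apply Nat.card_congr
  refine ⟨fun x => ⟨-(x.1 + 2), ?_⟩, fun x => ⟨-(x.1 + 2), ?_⟩, ?_, ?_⟩
  · obtain ⟨x, hx1, hx2⟩ := x
    simp only [RevC, Bool.not_eq_true', Bool.not_eq_false'] at hx1 hx2
    constructor
    · have : -(x + 2) = -(x + 1 + 1) := by ring
      rw [this]; exact hx2
    · have : -(x + 2) + 1 = -(x + 1) := by ring
      rw [this]; exact hx1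
  · obtain ⟨x, hx1, hx2⟩ := x
    constructor
    · show (!c (-(-((x : ZMod n) + 2) + 1))) = true
      have e : -(-((x : ZMod n) + 2) + 1) = x + 1 := by ring
      rw [e, hx2]; rfl
    · show (!c (-(-((x : ZMod n) + 2) + 1 + 1))) = false
      have e : -(-((x : ZMod n) + 2) + 1 + 1) = (x : ZMod n) := by ring
      rw [e, hx1]; rfl
  · intro x; ext; show -(-(x.1 + 2) + 2) = x.1; ring
  · intro x; ext; show -(-(x.1 + 2) + 2) = x.1; ring

lemma card_true_add [NeZero n] (c : ZMod n → Bool) :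
    (univ.filter fun i : ZMod n => c i = true).card
    + (univ.filter fun i : ZMod n => RevC c i = true).card = n := by
  have h : (univ.filter fun i : ZMod n => RevC c i = true).card
      = (univ.filter fun j : ZMod n => c j = false).card := by
    apply Finset.card_bij (fun i _ => -(i + 1))
    · intro a ha
      simp only [Finset.mem_filter, Finset.mem_univ, true_and, RevC,
        Bool.not_eq_true'] at ha ⊢
      exact ha
    · intro a _ b _ hab
      have : -(-(a + 1) + 1) = -(-(b + 1) + 1) := by rw [hab]
      simpa using this
    · intro b hb
      refine ⟨-(b + 1), ?_, by ring⟩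
      simp only [Finset.mem_filter, Finset.mem_univ, true_and, RevC,
        Bool.not_eq_true'] at hb ⊢
      have : -(-(b + 1) + 1) = b := by ring
      rw [this]; exact hb
  rw [h]
  have := Finset.card_filter_add_card_filter_not
    (s := (univ : Finset (ZMod n))) (p := fun i => c i = true)
  simp only [Bool.not_eq_true] at this
  rw [Finset.card_univ, ZMod.card] at this
  convert this using 2

lemma window_const (c : ZMod n → Bool) (j : ZMod n)
    (h : ∀ m : ℕ, m < 19 → c (j + (m : ZMod n)) = c (j + (m : ZMod n) + 1)) :
    ∀ i : ℕ, i < 20 → c (j + (i : ZMod n)) = c j := by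
  intro i
  induction i with
  | zero => intro _; norm_num
  | succ k ih =>
    intro hk
    have h1 := ih (by omega)
    have h2 := h k (by omega)
    have h3 : ((k + 1 : ℕ) : ZMod n) = (k : ZMod n) + 1 := by push_cast; ring
    rw [h3, ← add_assoc, ← h2, h1]

lemma run_fail (c : ZMod n → Bool) (j : ZMod n) (h : ¬ Run c j) :
    ∃ m : ℕ, m < 19 ∧ c (j + (m : ZMod n)) ≠ c (j + (m : ZMod n) + 1) := by
  by_contra hcon
  push_neg at hcon
  have hconst := window_const c j hcon
  apply h
  cases hcj : c j
  · right; intro i hi; rw [hconst i hi, hcj]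
  · left; intro i hi; rw [hconst i hi, hcj]

lemma fwd_fail (c : ZMod n → Bool) (j : ZMod n) (hj : c j = true) (h : ¬ FwdRun c j) :
    ∃ m : ℕ, m < 19 ∧ c (j + (m : ZMod n)) = true ∧ c (j + (m : ZMod n) + 1) = false := by
  by_contra hcon
  push_neg at hcon
  apply h
  intro i
  induction i with
  | zero => intro _; simpa using hj
  | succ k ih =>
    intro hk
    have h1 : c (j + (k : ZMod n)) = true := ih (by omega)
    have h2 := hcon k (by omega) h1
    have h3 : ((k + 1 : ℕ) : ZMod n) = (k : ZMod n) + 1 := by push_cast; ring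
    rw [h3, ← add_assoc]
    simpa using h2

/-- if `1/n ≪ ε ≪ 1`, `n/4 ≤ k ≤ 3n/4` and `C` is an oriented cycle on `n`
vertices with fewer than `ε n` sink vertices, then the vertices of `C` can be cyclically
enumerated (i.e. after possibly reversing the enumeration) so that (i) there are long
runs `P₁, P₂` with `P₁` forward and `d_C(P₁,P₂) = k`, and (ii) there are long runs
`P₁', P₂', P₃', P₄'` with `d_C(Pᵢ', P_{i+1}') = ⌊n/4⌋` for `i = 1,2,3`. -/
theorem stmt_8 :
    ∃ ε₀ : ℝ, 0 < ε₀ ∧ ∀ ε : ℝ, 0 < ε → ε ≤ ε₀ →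
    ∃ n₀ : ℕ, ∀ n : ℕ, n₀ ≤ n →
    ∀ k : ℕ, (n : ℝ) / 4 ≤ (k : ℝ) → (k : ℝ) ≤ 3 * (n : ℝ) / 4 →
    ∀ c : ZMod n → Bool, (CycleSinks c : ℝ) < ε * n →
    ∃ c' : ZMod n → Bool, (c' = c ∨ c' = RevC c) ∧
      (∃ j : ZMod n, FwdRun c' j ∧ Run c' (j + (k : ZMod n))) ∧
      (∃ j : ZMod n, Run c' j ∧ Run c' (j + ((n / 4 : ℕ) : ZMod n)) ∧
        Run c' (j + ((2 * (n / 4) : ℕ) : ZMod n)) ∧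
        Run c' (j + ((3 * (n / 4) : ℕ) : ZMod n))) := by
  classical
  refine ⟨1/1000, by norm_num, fun ε hε hε₀ => ⟨1, fun n hn k _ _ c hc => ?_⟩⟩
  haveI : NeZero n := ⟨by omega⟩
  -- numeric bound
  have hσn : 1000 * CycleSinks c < n := by
    have h0 : (0 : ℝ) ≤ (n : ℝ) := Nat.cast_nonneg n
    have hεn : ε * n ≤ (n : ℝ) / 1000 := by nlinarith
    have hr : ((1000 * CycleSinks c : ℕ) : ℝ) < (n : ℝ) := by push_cast; nlinarith
    exact_mod_cast hr
  -- choose orientation of the enumeration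
  obtain ⟨c', hc'or, hσ', htc⟩ :
      ∃ c' : ZMod n → Bool, (c' = c ∨ c' = RevC c) ∧ CycleSinks c' = CycleSinks c ∧
        n ≤ 2 * (univ.filter fun i : ZMod n => c' i = true).card := by
    by_cases h : n ≤ 2 * (univ.filter fun i : ZMod n => c i = true).card
    · exact ⟨c, Or.inl rfl, rfl, h⟩
    · refine ⟨RevC c, Or.inr rfl, cycleSinks_revC c, ?_⟩
      have := card_true_add c
      omega
  set σ := CycleSinks c with hσ
  set D := univ.filter (fun i : ZMod n => c' i = true ∧ c' (i + 1) = false) with hD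
  set U := univ.filter (fun i : ZMod n => c' i = false ∧ c' (i + 1) = true) with hU
  have hDcard : D.card = σ := by rw [hD, ← cycleSinks_eq]; exact hσ'
  have hUcard : U.card = σ := by rw [hU, ups_eq_downs, ← hD, hDcard]
  set BadR := univ.filter (fun j : ZMod n => ¬ Run c' j) with hBR
  have hBadR : BadR.card ≤ 38 * σ := by
    have hsub : BadR ⊆ ((D ∪ U) ×ˢ Finset.range 19).image
        (fun p : ZMod n × ℕ => p.1 - (p.2 : ZMod n)) := by
      intro j hj
      rw [hBR, Finset.mem_filter] at hj
      obtain ⟨m, hm, hne⟩ := run_fail c' j hj.2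
      refine Finset.mem_image.2 ⟨(j + (m : ZMod n), m), ?_, by show j + (m:ZMod n) - m = j; ring⟩
      rw [Finset.mem_product, Finset.mem_union]
      refine ⟨?_, Finset.mem_range.2 hm⟩
      cases h1 : c' (j + (m : ZMod n)) <;> cases h2 : c' (j + (m : ZMod n) + 1)
      · exact absurd (h1.trans h2.symm) hne
      · right; rw [hU, Finset.mem_filter]
        exact ⟨Finset.mem_univ _, h1, h2⟩
      · left; rw [hD, Finset.mem_filter]; exact ⟨Finset.mem_univ _, h1, h2⟩
      · exact absurd (h1.trans h2.symm) hne
    calc BadR.card ≤ _ := Finset.card_le_card hsub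
      _ ≤ ((D ∪ U) ×ˢ Finset.range 19).card := Finset.card_image_le
      _ = (D ∪ U).card * 19 := by rw [Finset.card_product, Finset.card_range]
      _ ≤ (D.card + U.card) * 19 := by
          exact Nat.mul_le_mul_right _ (Finset.card_union_le D U)
      _ = 38 * σ := by rw [hDcard, hUcard]; ring
  set GoodF := univ.filter (fun j : ZMod n => FwdRun c' j) with hGF
  have hGoodF : (univ.filter fun i : ZMod n => c' i = true).card ≤ GoodF.card + 19 * σ := by
    have hsub : (univ.filter fun i : ZMod n => c' i = true)
        ⊆ GoodF ∪ (D ×ˢ Finset.range 19).image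
          (fun p : ZMod n × ℕ => p.1 - (p.2 : ZMod n)) := by
      intro j hj
      rw [Finset.mem_filter] at hj
      by_cases hF : FwdRun c' j
      · exact Finset.mem_union_left _ (Finset.mem_filter.2 ⟨Finset.mem_univ _, hF⟩)
      · obtain ⟨m, hm, h1, h2⟩ := fwd_fail c' j hj.2 hF
        refine Finset.mem_union_right _ (Finset.mem_image.2
          ⟨(j + (m : ZMod n), m), ?_, by show j + (m:ZMod n) - m = j; ring⟩)
        rw [Finset.mem_product, Finset.mem_range, hD, Finset.mem_filter]
        exact ⟨⟨Finset.mem_univ _, h1, h2⟩, hm⟩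
    calc (univ.filter fun i : ZMod n => c' i = true).card
        ≤ _ := Finset.card_le_card hsub
      _ ≤ GoodF.card + ((D ×ˢ Finset.range 19).image
          (fun p : ZMod n × ℕ => p.1 - (p.2 : ZMod n))).card := Finset.card_union_le _ _
      _ ≤ GoodF.card + (D ×ˢ Finset.range 19).card := by
          exact Nat.add_le_add_left Finset.card_image_le _
      _ = GoodF.card + 19 * σ := by
          rw [Finset.card_product, Finset.card_range, hDcard]; ring
  -- part (i)
  have hpart1 : ∃ j : ZMod n, FwdRun c' j ∧ Run c' (j + (k : ZMod n)) := by
    have himg : (BadR.image (fun j : ZMod n => j - (k : ZMod n))).card ≤ 38 * σ :=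
      le_trans Finset.card_image_le hBadR
    have hne : (GoodF \ BadR.image (fun j : ZMod n => j - (k : ZMod n))).Nonempty := by
      rw [← Finset.card_pos]
      have := Finset.le_card_sdiff (BadR.image (fun j : ZMod n => j - (k : ZMod n))) GoodF
      omega
    obtain ⟨j, hj⟩ := hne
    rw [Finset.mem_sdiff] at hj
    refine ⟨j, (Finset.mem_filter.1 hj.1).2, ?_⟩
    by_contra hrun
    exact hj.2 (Finset.mem_image.2 ⟨j + (k : ZMod n),
      Finset.mem_filter.2 ⟨Finset.mem_univ _, hrun⟩, by ring⟩)
  -- part (ii)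
  have hpart2 : ∃ j : ZMod n, Run c' j ∧ Run c' (j + ((n / 4 : ℕ) : ZMod n)) ∧
      Run c' (j + ((2 * (n / 4) : ℕ) : ZMod n)) ∧ Run c' (j + ((3 * (n / 4) : ℕ) : ZMod n)) := by
    set B4 := BadR ∪ BadR.image (fun j : ZMod n => j - ((n / 4 : ℕ) : ZMod n))
      ∪ BadR.image (fun j : ZMod n => j - ((2 * (n / 4) : ℕ) : ZMod n))
      ∪ BadR.image (fun j : ZMod n => j - ((3 * (n / 4) : ℕ) : ZMod n)) with hB4
    have hB4card : B4.card < n := by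
      have c1 := Finset.card_image_le (s := BadR)
        (f := fun j : ZMod n => j - ((n / 4 : ℕ) : ZMod n))
      have c2 := Finset.card_image_le (s := BadR)
        (f := fun j : ZMod n => j - ((2 * (n / 4) : ℕ) : ZMod n))
      have c3 := Finset.card_image_le (s := BadR)
        (f := fun j : ZMod n => j - ((3 * (n / 4) : ℕ) : ZMod n))
      have u1 := Finset.card_union_le (BadR ∪ BadR.image (fun j : ZMod n => j - ((n / 4 : ℕ) : ZMod n))
        ∪ BadR.image (fun j : ZMod n => j - ((2 * (n / 4) : ℕ) : ZMod n)))
        (BadR.image (fun j : ZMod n => j - ((3 * (n / 4) : ℕ) : ZMod n)))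
      have u2 := Finset.card_union_le (BadR ∪ BadR.image (fun j : ZMod n => j - ((n / 4 : ℕ) : ZMod n)))
        (BadR.image (fun j : ZMod n => j - ((2 * (n / 4) : ℕ) : ZMod n)))
      have u3 := Finset.card_union_le BadR (BadR.image (fun j : ZMod n => j - ((n / 4 : ℕ) : ZMod n)))
      rw [← hB4] at u1
      omega
    obtain ⟨j, hj⟩ : ∃ j : ZMod n, j ∉ B4 := by
      by_contra h
      push_neg at h
      have hsub : (univ : Finset (ZMod n)) ⊆ B4 := fun j _ => h j
      have := Finset.card_le_card hsub
      rw [Finset.card_univ, ZMod.card] at this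
      omega
    rw [hB4] at hj
    simp only [Finset.mem_union, not_or] at hj
    obtain ⟨⟨⟨hj0, hj1⟩, hj2⟩, hj3⟩ := hj
    have hrun : ∀ x : ZMod n, j + x ∈ BadR → j ∈ BadR.image (fun i : ZMod n => i - x) :=
      fun x hx => Finset.mem_image.2 ⟨j + x, hx, by ring⟩
    refine ⟨j, ?_, ?_, ?_, ?_⟩
    · by_contra h; exact hj0 (Finset.mem_filter.2 ⟨Finset.mem_univ _, h⟩)
    · by_contra h; exact hj1 (hrun _ (Finset.mem_filter.2 ⟨Finset.mem_univ _, h⟩))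
    · by_contra h; exact hj2 (hrun _ (Finset.mem_filter.2 ⟨Finset.mem_univ _, h⟩))
    · by_contra h; exact hj3 (hrun _ (Finset.mem_filter.2 ⟨Finset.mem_univ _, h⟩))
  exact ⟨c', hc'or, hpart1, hpart2⟩
end
end

section
/- Let G be a digraph on n vertices with δ⁰(G) ≥ n/2. Let d ≥ 0 and suppose A, B, S, T is a partition of V(G) into sets of sizes a, b, s, t with t ≥ s ≥ d+2 and b = a+d. Then G contains a collection M of d+1 edges in E(T, S∪B) ∪ E(B, S) such that: the endvertices of the edges of M lying outside B are pairwise distinct, and each vertex of B is the endvertex of at most one TB-edge of M and at most one BS-edge of M. Moreover, if e(T,S) > 0, then M can be chosen to contain a TS-edge. -/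
open Finset

open scoped Classical

noncomputable section

variable {n : ℕ}

/-- Core matching lemma: under the two degree-sum conditions, we can find `m` edges
from `T₀ ∪ B` to `S₀ ∪ B` (B-tails only allowed into `S₀`) with pairwise distinct
tails and pairwise distinct heads. -/
lemma core_matching {N : ℕ} (G : Finset (Fin N × Fin N)) (S₀ T₀ B : Finset (Fin N))
    (hTB : Disjoint T₀ B) (m : ℕ)
    (hmS : m ≤ S₀.card) (hmT : m ≤ T₀.card)
    (hd : ∀ u ∈ S₀, ∀ v ∈ T₀,
      m ≤ ((T₀ ∪ B).filter fun w => (w, u) ∈ G).card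
          + ((S₀ ∪ B).filter fun x => (v, x) ∈ G).card) :
    ∃ M : Finset (Fin N × Fin N), M ⊆ G ∧ M.card = m ∧
      (∀ e ∈ M, e.1 ∈ T₀ ∪ B ∧ e.2 ∈ S₀ ∪ B ∧ (e.1 ∈ B → e.2 ∈ S₀)) ∧
      (∀ e ∈ M, ∀ f ∈ M, e.1 = f.1 → e = f) ∧
      (∀ e ∈ M, ∀ f ∈ M, e.2 = f.2 → e = f) := by
  classical
  set L := S₀ ∪ B with hL
  have hmL : m ≤ L.card := le_trans hmS (card_le_card subset_union_left)
  obtain ⟨D, hDL, hD⟩ := Finset.exists_subset_card_eq (show L.card - m ≤ L.card from Nat.sub_le _ _)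
  set tails : Fin N → Finset (Fin N) :=
    fun x => (T₀ ∪ B).filter fun v => (v, x) ∈ G ∧ (v ∈ B → x ∈ S₀) with htails
  set t : Fin N → Finset (Fin 3 × Fin N) := fun x =>
    if x ∈ L then (tails x).image (fun v => ((1 : Fin 3), v)) ∪ D.image (fun y => ((2 : Fin 3), y))
    else {((0 : Fin 3), x)} with ht
  have inj1 : Function.Injective (fun v : Fin N => ((1 : Fin 3), v)) := by
    intro a b h; simpa using h
  have inj2 : Function.Injective (fun v : Fin N => ((2 : Fin 3), v)) := by
    intro a b h; simpa using h
  have hall : ∀ W : Finset (Fin N), W.card ≤ (W.biUnion t).card := by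
    intro W
    set W1 := W ∩ L with hW1
    set W2 := W \ L with hW2
    have hWcard : W.card = W1.card + W2.card := by
      rw [hW1, hW2, Finset.card_inter_add_card_sdiff]
    rcases W1.eq_empty_or_nonempty with hne | hne
    · -- W ∩ L empty : all of W uses private dummies
      have hsub : W2.image (fun x => ((0 : Fin 3), x)) ⊆ W.biUnion t := by
        intro p hp
        obtain ⟨x, hx, rfl⟩ := Finset.mem_image.mp hp
        refine Finset.mem_biUnion.mpr ⟨x, (Finset.mem_sdiff.mp hx).1, ?_⟩
        rw [ht]; simp only
        rw [if_neg (Finset.mem_sdiff.mp hx).2]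
        exact Finset.mem_singleton_self _
      have := Finset.card_le_card hsub
      rw [Finset.card_image_of_injective _ (by intro a b h; simpa using h)] at this
      have hW1z : W1.card = 0 := by rw [hne]; rfl
      omega
    · set realN := W1.biUnion tails with hrealN
      -- key inequality
      have key : m ≤ realN.card + (L.card - W1.card) := by
        have hW1L : W1 ⊆ L := Finset.inter_subset_right
        have hcs : (L \ W1).card = L.card - W1.card := Finset.card_sdiff_of_subset hW1L
        by_cases hTsub : T₀ ⊆ realN
        · have := Finset.card_le_card hTsub
          omega
        · obtain ⟨v, hvT, hvN⟩ := Finset.not_subset.mp hTsub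
          by_cases hSW : (W1 ∩ S₀).Nonempty
          · obtain ⟨u, hu⟩ := hSW
            have huW1 : u ∈ W1 := (Finset.mem_inter.mp hu).1
            have huS : u ∈ S₀ := (Finset.mem_inter.mp hu).2
            -- tails u ⊆ realN, and it equals the full in-filter since u ∈ S₀
            have h1 : ((T₀ ∪ B).filter fun w => (w, u) ∈ G) ⊆ realN := by
              intro w hw
              refine Finset.mem_biUnion.mpr ⟨u, huW1, ?_⟩
              rw [htails]
              simp only [Finset.mem_filter] at hw ⊢
              exact ⟨hw.1, hw.2, fun _ => huS⟩
            -- heads of v lie in L \ W1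
            have h2 : (L.filter fun x => (v, x) ∈ G) ⊆ L \ W1 := by
              intro x hx
              simp only [Finset.mem_filter] at hx
              refine Finset.mem_sdiff.mpr ⟨hx.1, fun hxW1 => ?_⟩
              apply hvN
              refine Finset.mem_biUnion.mpr ⟨x, hxW1, ?_⟩
              rw [htails]
              refine Finset.mem_filter.mpr ⟨Finset.mem_union_left _ hvT, hx.2, fun hvB => ?_⟩
              exact absurd hvB (Finset.disjoint_left.mp hTB hvT)
            have hd' := hd u huS v hvT
            have c1 := Finset.card_le_card h1
            have c2 := Finset.card_le_card h2
            omega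
          · -- W1 ∩ S₀ empty, so S₀ ⊆ L \ W1
            have h3 : S₀ ⊆ L \ W1 := by
              intro x hx
              refine Finset.mem_sdiff.mpr ⟨Finset.mem_union_left _ hx, fun hxW1 => ?_⟩
              have : x ∈ W1 ∩ S₀ := Finset.mem_inter.mpr ⟨hxW1, hx⟩
              rw [Finset.not_nonempty_iff_eq_empty] at hSW
              simp [hSW] at this
            have := Finset.card_le_card h3
            omega
      -- build the candidate subset of the biUnion
      set U := W2.image (fun x => ((0 : Fin 3), x)) ∪
        (realN.image (fun v => ((1 : Fin 3), v)) ∪ D.image (fun y => ((2 : Fin 3), y))) with hU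
      have hUsub : U ⊆ W.biUnion t := by
        intro p hp
        rw [hU] at hp
        rcases Finset.mem_union.mp hp with hp | hp
        · obtain ⟨x, hx, rfl⟩ := Finset.mem_image.mp hp
          refine Finset.mem_biUnion.mpr ⟨x, (Finset.mem_sdiff.mp hx).1, ?_⟩
          rw [ht]; simp only
          rw [if_neg (Finset.mem_sdiff.mp hx).2]
          exact Finset.mem_singleton_self _
        rcases Finset.mem_union.mp hp with hp | hp
        · obtain ⟨v, hv, rfl⟩ := Finset.mem_image.mp hp
          obtain ⟨x, hxW1, hvx⟩ := Finset.mem_biUnion.mp hv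
          refine Finset.mem_biUnion.mpr ⟨x, (Finset.mem_inter.mp hxW1).1, ?_⟩
          rw [ht]; simp only
          rw [if_pos (Finset.mem_inter.mp hxW1).2]
          exact Finset.mem_union_left _ (Finset.mem_image_of_mem _ hvx)
        · obtain ⟨y, hy, rfl⟩ := Finset.mem_image.mp hp
          obtain ⟨x0, hx0⟩ := hne
          refine Finset.mem_biUnion.mpr ⟨x0, (Finset.mem_inter.mp hx0).1, ?_⟩
          rw [ht]; simp only
          rw [if_pos (Finset.mem_inter.mp hx0).2]
          exact Finset.mem_union_right _ (Finset.mem_image_of_mem _ hy)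
      have hfst : ∀ (c : Fin 3) (s : Finset (Fin N)) (p : Fin 3 × Fin N),
          p ∈ s.image (fun v => (c, v)) → p.1 = c := by
        intro c s p hp
        obtain ⟨v, _, rfl⟩ := Finset.mem_image.mp hp
        rfl
      have hUcard : U.card = W2.card + (realN.card + D.card) := by
        rw [hU]
        rw [Finset.card_union_of_disjoint, Finset.card_union_of_disjoint]
        · rw [Finset.card_image_of_injective _ (by intro a b h; simpa using h : Function.Injective (fun v : Fin N => ((0 : Fin 3), v))),
            Finset.card_image_of_injective _ inj1, Finset.card_image_of_injective _ inj2]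
        · rw [Finset.disjoint_left]
          intro p hp hq
          have h1 := hfst _ _ _ hp
          have h2 := hfst _ _ _ hq
          exact absurd (h1.symm.trans h2) (by decide)
        · rw [Finset.disjoint_left]
          intro p hp hq
          have h1 := hfst _ _ _ hp
          rcases Finset.mem_union.mp hq with hq | hq
          · have h2 := hfst _ _ _ hq
            exact absurd (h1.symm.trans h2) (by decide)
          · have h2 := hfst _ _ _ hq
            exact absurd (h1.symm.trans h2) (by decide)
      have := Finset.card_le_card hUsub
      have hW1L : W1 ⊆ L := Finset.inter_subset_right
      have := Finset.card_le_card hW1L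
      omega
  obtain ⟨f, hfinj, hft⟩ := (Finset.all_card_le_biUnion_card_iff_exists_injective t).mp hall
  -- members of L are matched either to real tails or shared dummies
  have hmem : ∀ x ∈ L, ((f x).1 = 1 ∧ (f x).2 ∈ tails x) ∨ ((f x).1 = 2 ∧ (f x).2 ∈ D) := by
    intro x hx
    have := hft x
    rw [ht] at this; simp only at this
    rw [if_pos hx] at this
    rcases Finset.mem_union.mp this with h | h
    · obtain ⟨v, hv, heq⟩ := Finset.mem_image.mp h
      left
      constructor
      · rw [← heq]
      · rw [← heq]; exact hv
    · obtain ⟨y, hy, heq⟩ := Finset.mem_image.mp h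
      right
      constructor
      · rw [← heq]
      · rw [← heq]; exact hy
  have hbad : (L.filter (fun x => ¬ (f x).1 = 1)).card ≤ D.card := by
    apply Finset.card_le_card_of_injOn (fun x => (f x).2)
    · intro x hx
      rcases hmem x (Finset.mem_filter.mp hx).1 with h | h
      · exact absurd h.1 (Finset.mem_filter.mp hx).2
      · exact h.2
    · intro a ha b hb hab
      have ha2 : (f a).1 = 2 := by
        rcases hmem a (Finset.mem_filter.mp ha).1 with h | h
        · exact absurd h.1 (Finset.mem_filter.mp ha).2
        · exact h.1
      have hb2 : (f b).1 = 2 := by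
        rcases hmem b (Finset.mem_filter.mp hb).1 with h | h
        · exact absurd h.1 (Finset.mem_filter.mp hb).2
        · exact h.1
      exact hfinj (Prod.ext (ha2.trans hb2.symm) hab)
  have hgoodcard : m ≤ (L.filter (fun x => (f x).1 = 1)).card := by
    have h1 := Finset.card_filter_add_card_filter_not (s := L) (p := fun x => (f x).1 = 1)
    omega
  obtain ⟨K, hKL, hK⟩ := Finset.exists_subset_card_eq hgoodcard
  have hKtails : ∀ x ∈ K, (f x).1 = 1 ∧ (f x).2 ∈ tails x := by
    intro x hx
    have hx' := hKL hx
    rcases hmem x (Finset.mem_filter.mp hx').1 with h | h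
    · exact h
    · exfalso
      have h1 := (Finset.mem_filter.mp hx').2
      rw [h.1] at h1
      exact absurd h1 (by decide)
  refine ⟨K.image (fun x => ((f x).2, x)), ?_, ?_, ?_, ?_, ?_⟩
  · intro e he
    obtain ⟨x, hx, rfl⟩ := Finset.mem_image.mp he
    have := (hKtails x hx).2
    rw [htails] at this
    exact (Finset.mem_filter.mp this).2.1
  · rw [Finset.card_image_of_injOn, hK]
    intro a _ b _ hab
    exact congrArg Prod.snd hab
  · intro e he
    obtain ⟨x, hx, rfl⟩ := Finset.mem_image.mp he
    have h2 := (hKtails x hx).2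
    rw [htails] at h2
    have h2' := Finset.mem_filter.mp h2
    have hxL : x ∈ L := (Finset.mem_filter.mp (hKL hx)).1
    exact ⟨h2'.1, hxL, fun hB => h2'.2.2 hB⟩
  · intro e he g hg heq
    obtain ⟨x, hx, rfl⟩ := Finset.mem_image.mp he
    obtain ⟨y, hy, rfl⟩ := Finset.mem_image.mp hg
    simp only at heq
    have : f x = f y := Prod.ext ((hKtails x hx).1.trans (hKtails y hy).1.symm) heq
    rw [hfinj this]
  · intro e he g hg heq
    obtain ⟨x, hx, rfl⟩ := Finset.mem_image.mp he
    obtain ⟨y, hy, rfl⟩ := Finset.mem_image.mp hg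
    simp only at heq
    rw [heq]

lemma count_in {N : ℕ} (G : Finset (Fin N × Fin N)) (u : Fin N) :
    (G.filter fun e => e.2 = u ∧ e.1 ∈ (Finset.univ : Finset (Fin N))).card
      = (Finset.univ.filter fun w => (w, u) ∈ G).card := by
  apply Finset.card_bij (fun e _ => e.1)
  · intro e he
    simp only [Finset.mem_filter] at he ⊢
    refine ⟨Finset.mem_univ _, ?_⟩
    have h : (e.1, u) = e := Prod.ext rfl he.2.1.symm
    rw [h]
    exact he.1
  · intro e₁ h₁ e₂ h₂ h
    simp only [Finset.mem_filter] at h₁ h₂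
    exact Prod.ext h (h₁.2.1.trans h₂.2.1.symm)
  · intro w hw
    simp only [Finset.mem_filter] at hw
    exact ⟨(w, u), Finset.mem_filter.mpr ⟨hw.2, rfl, Finset.mem_univ _⟩, rfl⟩

lemma count_out {N : ℕ} (G : Finset (Fin N × Fin N)) (v : Fin N) :
    (G.filter fun e => e.1 = v ∧ e.2 ∈ (Finset.univ : Finset (Fin N))).card
      = (Finset.univ.filter fun x => (v, x) ∈ G).card := by
  apply Finset.card_bij (fun e _ => e.2)
  · intro e he
    simp only [Finset.mem_filter] at he ⊢
    refine ⟨Finset.mem_univ _, ?_⟩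
    have h : (v, e.2) = e := Prod.ext he.2.1.symm rfl
    rw [h]
    exact he.1
  · intro e₁ h₁ e₂ h₂ h
    simp only [Finset.mem_filter] at h₁ h₂
    exact Prod.ext (h₁.2.1.trans h₂.2.1.symm) h
  · intro x hx
    simp only [Finset.mem_filter] at hx
    exact ⟨(v, x), Finset.mem_filter.mpr ⟨hx.2, rfl, Finset.mem_univ _⟩, rfl⟩

/-- if `δ⁰(G) ≥ n/2` and `A,B,S,T` is a partition with `t ≥ s ≥ d+2` and
`b = a+d`, then `G` contains `d+1` edges in `E(T, S∪B) ∪ E(B, S)` whose endvertices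
outside `B` are pairwise distinct, each vertex of `B` being the endvertex of at most one
`TB`-edge and at most one `BS`-edge among them; moreover if `e(T,S) > 0`, the collection
can be chosen to contain a `TS`-edge. -/
theorem stmt_9 (n : ℕ)
    (G : Finset (Fin n × Fin n)) (hloops : ∀ e ∈ G, e.1 ≠ e.2)
    (hdeg : MinSemi G ((n : ℝ) / 2))
    (d : ℕ)
    (A B S T : Finset (Fin n)) (hpart : Partition4 A B S T)
    (hs : d + 2 ≤ S.card) (hst : S.card ≤ T.card)
    (hb : B.card = A.card + d) :
    ∃ M : Finset (Fin n × Fin n), M ⊆ G ∧ M.card = d + 1 ∧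
      (∀ e ∈ M, (e.1 ∈ T ∧ e.2 ∈ S ∪ B) ∨ (e.1 ∈ B ∧ e.2 ∈ S)) ∧
      (∀ e ∈ M, ∀ f ∈ M, e ≠ f →
        ∀ u ∈ ({e.1, e.2} : Finset (Fin n)), ∀ v ∈ ({f.1, f.2} : Finset (Fin n)),
          u ∉ B → v ∉ B → u ≠ v) ∧
      (∀ x ∈ B, (M.filter fun e => e.1 ∈ T ∧ e.2 = x).card ≤ 1 ∧
        (M.filter fun e => e.1 = x ∧ e.2 ∈ S).card ≤ 1) ∧
      (0 < (G.filter fun e => e.1 ∈ T ∧ e.2 ∈ S).card →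
        ∃ e ∈ M, e.1 ∈ T ∧ e.2 ∈ S) := by
  classical
  obtain ⟨huniv, hAB, hAS, hAT, hBS, hBT, hST⟩ := hpart
  have hsum : A.card + B.card + S.card + T.card = n := by
    have h1 : Disjoint (A ∪ B) S := Finset.disjoint_union_left.mpr ⟨hAS, hBS⟩
    have h2 : Disjoint (A ∪ B ∪ S) T :=
      Finset.disjoint_union_left.mpr ⟨Finset.disjoint_union_left.mpr ⟨hAT, hBT⟩, hST⟩
    have h3 := congrArg Finset.card huniv
    rw [Finset.card_union_of_disjoint h2, Finset.card_union_of_disjoint h1,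
      Finset.card_union_of_disjoint hAB] at h3
    simpa using h3
  -- in-degree bound for u ∈ S
  have hIn : ∀ u ∈ S, (Finset.univ.filter fun w => (w, u) ∈ G).card + 1 ≤
      ((T ∪ B).filter fun w => (w, u) ∈ G).card + (A.card + S.card) := by
    intro u hu
    have hsub : (Finset.univ.filter fun w => (w, u) ∈ G) ⊆
        ((T ∪ B).filter fun w => (w, u) ∈ G) ∪ ((A ∪ S).erase u) := by
      intro w hw
      have hwG : (w, u) ∈ G := (Finset.mem_filter.mp hw).2
      have hw4 : w ∈ A ∪ B ∪ S ∪ T := by rw [huniv]; exact Finset.mem_univ w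
      rcases Finset.mem_union.mp hw4 with hw3 | hwT
      · rcases Finset.mem_union.mp hw3 with hw2 | hwS
        · rcases Finset.mem_union.mp hw2 with hwA | hwB
          · exact Finset.mem_union_right _
              (Finset.mem_erase.mpr ⟨hloops _ hwG, Finset.mem_union_left _ hwA⟩)
          · exact Finset.mem_union_left _
              (Finset.mem_filter.mpr ⟨Finset.mem_union_right _ hwB, hwG⟩)
        · exact Finset.mem_union_right _
            (Finset.mem_erase.mpr ⟨hloops _ hwG, Finset.mem_union_right _ hwS⟩)
      · exact Finset.mem_union_left _
          (Finset.mem_filter.mpr ⟨Finset.mem_union_left _ hwT, hwG⟩)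
    have hc1 := Finset.card_le_card hsub
    have hc2 := Finset.card_union_le ((T ∪ B).filter fun w => (w, u) ∈ G) ((A ∪ S).erase u)
    have hc3 : ((A ∪ S).erase u).card = (A ∪ S).card - 1 :=
      Finset.card_erase_of_mem (Finset.mem_union_right _ hu)
    have hc4 : (A ∪ S).card = A.card + S.card := Finset.card_union_of_disjoint hAS
    have hc5 : 0 < (A ∪ S).card := Finset.card_pos.mpr ⟨u, Finset.mem_union_right _ hu⟩
    omega
  -- out-degree bound for v ∈ T
  have hOut : ∀ v ∈ T, (Finset.univ.filter fun x => (v, x) ∈ G).card + 1 ≤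
      ((S ∪ B).filter fun x => (v, x) ∈ G).card + (A.card + T.card) := by
    intro v hv
    have hsub : (Finset.univ.filter fun x => (v, x) ∈ G) ⊆
        ((S ∪ B).filter fun x => (v, x) ∈ G) ∪ ((A ∪ T).erase v) := by
      intro w hw
      have hwG : (v, w) ∈ G := (Finset.mem_filter.mp hw).2
      have hw4 : w ∈ A ∪ B ∪ S ∪ T := by rw [huniv]; exact Finset.mem_univ w
      have hwv : w ≠ v := fun h => hloops _ hwG (by rw [h])
      rcases Finset.mem_union.mp hw4 with hw3 | hwT
      · rcases Finset.mem_union.mp hw3 with hw2 | hwS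
        · rcases Finset.mem_union.mp hw2 with hwA | hwB
          · exact Finset.mem_union_right _
              (Finset.mem_erase.mpr ⟨hwv, Finset.mem_union_left _ hwA⟩)
          · exact Finset.mem_union_left _
              (Finset.mem_filter.mpr ⟨Finset.mem_union_right _ hwB, hwG⟩)
        · exact Finset.mem_union_left _
            (Finset.mem_filter.mpr ⟨Finset.mem_union_left _ hwS, hwG⟩)
      · exact Finset.mem_union_right _
          (Finset.mem_erase.mpr ⟨hwv, Finset.mem_union_right _ hwT⟩)
    have hc1 := Finset.card_le_card hsub
    have hc2 := Finset.card_union_le ((S ∪ B).filter fun x => (v, x) ∈ G) ((A ∪ T).erase v)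
    have hc3 : ((A ∪ T).erase v).card = (A ∪ T).card - 1 :=
      Finset.card_erase_of_mem (Finset.mem_union_right _ hv)
    have hc4 : (A ∪ T).card = A.card + T.card := Finset.card_union_of_disjoint hAT
    have hc5 : 0 < (A ∪ T).card := Finset.card_pos.mpr ⟨v, Finset.mem_union_right _ hv⟩
    omega
  -- the key degree-sum inequality
  have hkey : ∀ u ∈ S, ∀ v ∈ T, d + 2 ≤
      ((T ∪ B).filter fun w => (w, u) ∈ G).card +
      ((S ∪ B).filter fun x => (v, x) ∈ G).card := by
    intro u hu v hv
    have h1 := (hdeg u).2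
    have h2 := (hdeg v).1
    unfold dMinus at h1
    unfold dPlus at h2
    rw [count_in] at h1
    rw [count_out] at h2
    have h3 := hIn u hu
    have h4 := hOut v hv
    have hc : ((d : ℝ) + 2) ≤
        (((T ∪ B).filter fun w => (w, u) ∈ G).card : ℝ) +
        (((S ∪ B).filter fun x => (v, x) ∈ G).card : ℝ) := by
      have e1 : ((Finset.univ.filter fun w => (w, u) ∈ G).card : ℝ) + 1 ≤
          (((T ∪ B).filter fun w => (w, u) ∈ G).card : ℝ) + ((A.card : ℝ) + S.card) := by
        exact_mod_cast h3
      have e2 : ((Finset.univ.filter fun x => (v, x) ∈ G).card : ℝ) + 1 ≤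
          (((S ∪ B).filter fun x => (v, x) ∈ G).card : ℝ) + ((A.card : ℝ) + T.card) := by
        exact_mod_cast h4
      have e3 : (A.card : ℝ) + B.card + S.card + T.card = n := by exact_mod_cast hsum
      have e4 : (B.card : ℝ) = A.card + d := by exact_mod_cast hb
      linarith
    exact_mod_cast hc
  by_cases hTS : 0 < (G.filter fun e => e.1 ∈ T ∧ e.2 ∈ S).card
  · -- there is a TS-edge e₀; reserve it and find d more edges
    obtain ⟨e₀, he₀⟩ := Finset.card_pos.mp hTS
    have he₀' := Finset.mem_filter.mp he₀
    have he₀G : e₀ ∈ G := he₀'.1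
    have he₀T : e₀.1 ∈ T := he₀'.2.1
    have he₀S : e₀.2 ∈ S := he₀'.2.2
    have hTB' : Disjoint (T.erase e₀.1) B :=
      Finset.disjoint_of_subset_left (Finset.erase_subset _ _) hBT.symm
    have hmS' : d ≤ (S.erase e₀.2).card := by
      rw [Finset.card_erase_of_mem he₀S]; omega
    have hmT' : d ≤ (T.erase e₀.1).card := by
      rw [Finset.card_erase_of_mem he₀T]; omega
    have hd' : ∀ u ∈ S.erase e₀.2, ∀ v ∈ T.erase e₀.1, d ≤
        (((T.erase e₀.1) ∪ B).filter fun w => (w, u) ∈ G).card +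
        (((S.erase e₀.2) ∪ B).filter fun x => (v, x) ∈ G).card := by
      intro u hu v hv
      have hk := hkey u (Finset.mem_of_mem_erase hu) v (Finset.mem_of_mem_erase hv)
      have hs1 : ((T ∪ B).filter fun w => (w, u) ∈ G) ⊆
          insert e₀.1 (((T.erase e₀.1) ∪ B).filter fun w => (w, u) ∈ G) := by
        intro w hw
        have hw' := Finset.mem_filter.mp hw
        by_cases hwe : w = e₀.1
        · rw [hwe]; exact Finset.mem_insert_self _ _
        · refine Finset.mem_insert_of_mem (Finset.mem_filter.mpr ⟨?_, hw'.2⟩)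
          rcases Finset.mem_union.mp hw'.1 with h | h
          · exact Finset.mem_union_left _ (Finset.mem_erase.mpr ⟨hwe, h⟩)
          · exact Finset.mem_union_right _ h
      have hs2 : ((S ∪ B).filter fun x => (v, x) ∈ G) ⊆
          insert e₀.2 (((S.erase e₀.2) ∪ B).filter fun x => (v, x) ∈ G) := by
        intro w hw
        have hw' := Finset.mem_filter.mp hw
        by_cases hwe : w = e₀.2
        · rw [hwe]; exact Finset.mem_insert_self _ _
        · refine Finset.mem_insert_of_mem (Finset.mem_filter.mpr ⟨?_, hw'.2⟩)
          rcases Finset.mem_union.mp hw'.1 with h | h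
          · exact Finset.mem_union_left _ (Finset.mem_erase.mpr ⟨hwe, h⟩)
          · exact Finset.mem_union_right _ h
      have hc1 := Finset.card_le_card hs1
      have hc2 := Finset.card_le_card hs2
      have hc3 := Finset.card_insert_le e₀.1 (((T.erase e₀.1) ∪ B).filter fun w => (w, u) ∈ G)
      have hc4 := Finset.card_insert_le e₀.2 (((S.erase e₀.2) ∪ B).filter fun x => (v, x) ∈ G)
      omega
    obtain ⟨M₀, hMG, hMcard, htype, hfst, hsnd⟩ :=
      core_matching G (S.erase e₀.2) (T.erase e₀.1) B hTB' d hmS' hmT' hd'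
    have hM₀facts : ∀ e ∈ M₀, (e.1 ∈ T ∪ B) ∧ (e.2 ∈ S ∪ B) ∧ (e.1 ∈ B → e.2 ∈ S) ∧
        e.1 ≠ e₀.1 ∧ e.2 ≠ e₀.2 := by
      intro e he
      obtain ⟨h1, h2, h3⟩ := htype e he
      have hA1 : e.1 ∈ T ∪ B ∧ e.1 ≠ e₀.1 := by
        rcases Finset.mem_union.mp h1 with h | h
        · exact ⟨Finset.mem_union_left _ (Finset.mem_of_mem_erase h), Finset.ne_of_mem_erase h⟩
        · exact ⟨Finset.mem_union_right _ h,
            fun hEq => Finset.disjoint_left.mp hBT h (by rw [hEq]; exact he₀T)⟩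
      have hA2 : e.2 ∈ S ∪ B ∧ e.2 ≠ e₀.2 := by
        rcases Finset.mem_union.mp h2 with h | h
        · exact ⟨Finset.mem_union_left _ (Finset.mem_of_mem_erase h), Finset.ne_of_mem_erase h⟩
        · exact ⟨Finset.mem_union_right _ h,
            fun hEq => Finset.disjoint_left.mp hBS h (by rw [hEq]; exact he₀S)⟩
      exact ⟨hA1.1, hA2.1, fun hB' => Finset.mem_of_mem_erase (h3 hB'), hA1.2, hA2.2⟩
    have hmemT : ∀ g ∈ M₀, g.1 ∉ B → g.1 ∈ T := by
      intro g hg hgB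
      rcases Finset.mem_union.mp (hM₀facts g hg).1 with h | h
      · exact h
      · exact absurd h hgB
    have hmemS : ∀ g ∈ M₀, g.2 ∉ B → g.2 ∈ S := by
      intro g hg hgB
      rcases Finset.mem_union.mp (hM₀facts g hg).2.1 with h | h
      · exact h
      · exact absurd h hgB
    have hne₀ : e₀ ∉ M₀ := fun h => (hM₀facts e₀ h).2.2.2.2 rfl
    refine ⟨insert e₀ M₀, ?_, ?_, ?_, ?_, ?_, ?_⟩
    · exact Finset.insert_subset he₀G hMG
    · rw [Finset.card_insert_of_notMem hne₀, hMcard]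
    · intro e he
      rcases Finset.mem_insert.mp he with rfl | heM
      · exact Or.inl ⟨he₀T, Finset.mem_union_left _ he₀S⟩
      · obtain ⟨h1, h2, h3, _, _⟩ := hM₀facts e heM
        rcases Finset.mem_union.mp h1 with h | h
        · exact Or.inl ⟨h, h2⟩
        · exact Or.inr ⟨h, h3 h⟩
    · intro e he f hf hef u hu v hv huB hvB
      simp only [Finset.mem_insert, Finset.mem_singleton] at hu hv
      rcases Finset.mem_insert.mp he with rfl | heM <;>
        rcases Finset.mem_insert.mp hf with rfl | hfM
      · exact absurd rfl hef
      · rcases hu with rfl | rfl <;> rcases hv with rfl | rfl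
        · exact fun h => (hM₀facts f hfM).2.2.2.1 h.symm
        · exact fun h => Finset.disjoint_left.mp hST (hmemS f hfM hvB) (by rw [← h]; exact he₀T)
        · exact fun h => Finset.disjoint_left.mp hST he₀S (by rw [h]; exact hmemT f hfM hvB)
        · exact fun h => (hM₀facts f hfM).2.2.2.2 h.symm
      · rcases hu with rfl | rfl <;> rcases hv with rfl | rfl
        · exact fun h => (hM₀facts e heM).2.2.2.1 h
        · exact fun h => Finset.disjoint_left.mp hST he₀S (by rw [← h]; exact hmemT e heM huB)
        · exact fun h => Finset.disjoint_left.mp hST (hmemS e heM huB) (by rw [h]; exact he₀T)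
        · exact fun h => (hM₀facts e heM).2.2.2.2 h
      · rcases hu with rfl | rfl <;> rcases hv with rfl | rfl
        · exact fun h => hef (hfst e heM f hfM h)
        · exact fun h => Finset.disjoint_left.mp hST (hmemS f hfM hvB) (by rw [← h]; exact hmemT e heM huB)
        · exact fun h => Finset.disjoint_left.mp hST (hmemS e heM huB) (by rw [h]; exact hmemT f hfM hvB)
        · exact fun h => hef (hsnd e heM f hfM h)
    · intro x hx
      constructor
      · rw [Finset.filter_insert, if_neg]
        · refine Finset.card_le_one.mpr ?_
          intro a ha b hb
          have ha' := Finset.mem_filter.mp ha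
          have hb' := Finset.mem_filter.mp hb
          exact hsnd a ha'.1 b hb'.1 (ha'.2.2.trans hb'.2.2.symm)
        · rintro ⟨-, h2⟩
          exact Finset.disjoint_left.mp hBS hx (h2 ▸ he₀S)
      · rw [Finset.filter_insert, if_neg]
        · refine Finset.card_le_one.mpr ?_
          intro a ha b hb
          have ha' := Finset.mem_filter.mp ha
          have hb' := Finset.mem_filter.mp hb
          exact hfst a ha'.1 b hb'.1 (ha'.2.1.trans hb'.2.1.symm)
        · rintro ⟨h1, -⟩
          exact Finset.disjoint_left.mp hBT hx (h1 ▸ he₀T)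
    · intro _
      exact ⟨e₀, Finset.mem_insert_self _ _, he₀T, he₀S⟩
  · -- no TS-edge: just find d+1 edges
    have hd' : ∀ u ∈ S, ∀ v ∈ T, d + 1 ≤
        ((T ∪ B).filter fun w => (w, u) ∈ G).card +
        ((S ∪ B).filter fun x => (v, x) ∈ G).card := by
      intro u hu v hv
      have := hkey u hu v hv
      omega
    obtain ⟨M₀, hMG, hMcard, htype, hfst, hsnd⟩ :=
      core_matching G S T B hBT.symm (d + 1) (by omega) (by omega) hd'
    have hmemT : ∀ g ∈ M₀, g.1 ∉ B → g.1 ∈ T := by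
      intro g hg hgB
      rcases Finset.mem_union.mp (htype g hg).1 with h | h
      · exact h
      · exact absurd h hgB
    have hmemS : ∀ g ∈ M₀, g.2 ∉ B → g.2 ∈ S := by
      intro g hg hgB
      rcases Finset.mem_union.mp (htype g hg).2.1 with h | h
      · exact h
      · exact absurd h hgB
    refine ⟨M₀, hMG, hMcard, ?_, ?_, ?_, ?_⟩
    · intro e he
      obtain ⟨h1, h2, h3⟩ := htype e he
      rcases Finset.mem_union.mp h1 with h | h
      · exact Or.inl ⟨h, h2⟩
      · exact Or.inr ⟨h, h3 h⟩
    · intro e he f hf hef u hu v hv huB hvB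
      simp only [Finset.mem_insert, Finset.mem_singleton] at hu hv
      rcases hu with rfl | rfl <;> rcases hv with rfl | rfl
      · exact fun h => hef (hfst e he f hf h)
      · exact fun h => Finset.disjoint_left.mp hST (hmemS f hf hvB) (by rw [← h]; exact hmemT e he huB)
      · exact fun h => Finset.disjoint_left.mp hST (hmemS e he huB) (by rw [h]; exact hmemT f hf hvB)
      · exact fun h => hef (hsnd e he f hf h)
    · intro x hx
      constructor
      · refine Finset.card_le_one.mpr ?_
        intro a ha b hb
        have ha' := Finset.mem_filter.mp ha
        have hb' := Finset.mem_filter.mp hb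
        exact hsnd a ha'.1 b hb'.1 (ha'.2.2.trans hb'.2.2.symm)
      · refine Finset.card_le_one.mpr ?_
        intro a ha b hb
        have ha' := Finset.mem_filter.mp ha
        have hb' := Finset.mem_filter.mp hb
        exact hfst a ha'.1 b hb'.1 (ha'.2.1.trans hb'.2.1.symm)
    · intro h
      exact absurd h hTS
end
end
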